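/- arXiv:2403.19630 — 4 statements merged into one kernel-verified Lean document; each statement's English description precedes it below -/
import Mathlib

section
/- For every nonzero real number x, |1/sinh(x)² − 1/x²| ≤ 1/3. -/
/-!
Both sides are even in `x`, so take `x > 0`. Since `x < sinh x`, the difference `1 / sinh x ^ 2 - 1 / x ^ 2` is nonpositive, so only
the lower bound `-1/3` needs work. Comparing the power series of `sinh` term by term, each term
after the first is at most `x ^ 2 / 6` times its predecessor, so `sinh x - x ≤ x ^ 2 / 6 * sinh x`,
i.e. `sinh x * (1 - x ^ 2 / 6) ≤ x`. Squaring and using `3 - x ^ 2 ≤ 3 * (1 - x ^ 2 / 6) ^ 2` gives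
`sinh x ^ 2 * (3 - x ^ 2) ≤ 3 * x ^ 2`, which is the required bound after clearing denominators.
-/

open Nat

lemma Nat.six_mul_factorial_le (n : ℕ) : 6 * (2 * n + 1)! ≤ (2 * n + 3)! := by
  have hfac : (2 * n + 3)! = (2 * n + 3) * (2 * n + 2) * (2 * n + 1)! := by
    rw [show 2 * n + 3 = (2 * n + 2) + 1 by ring, factorial_succ, factorial_succ, mul_assoc]
  rw [hfac]
  exact Nat.mul_le_mul_right _ (by nlinarith)

namespace Real

lemma sinh_sub_self_le {x : ℝ} (hx : 0 ≤ x) : sinh x - x ≤ x ^ 2 / 6 * sinh x := by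
  have htail : HasSum (fun n : ℕ ↦ x ^ (2 * n + 3) / (2 * n + 3)!) (sinh x - x) := by
    simpa only [Finset.range_one, Finset.sum_singleton, mul_zero, zero_add, pow_one, factorial_one,
      cast_one, div_one, mul_add, mul_one, add_assoc] using
      (hasSum_nat_add_iff' 1).mpr (hasSum_sinh x)
  refine hasSum_le (fun n ↦ ?_) htail ((hasSum_sinh x).mul_left (x ^ 2 / 6))
  have hfac : (6 * (2 * n + 1)! : ℝ) ≤ (2 * n + 3)! := by exact_mod_cast six_mul_factorial_le n
  calc x ^ (2 * n + 3) / (2 * n + 3)!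
      ≤ x ^ (2 * n + 3) / (6 * (2 * n + 1)!) :=
        div_le_div_of_nonneg_left (by positivity) (by positivity) hfac
    _ = x ^ 2 / 6 * (x ^ (2 * n + 1) / (2 * n + 1)!) := by ring

lemma sinh_sq_mul_three_sub_sq_le {x : ℝ} (hx : 0 ≤ x) : sinh x ^ 2 * (3 - x ^ 2) ≤ 3 * x ^ 2 := by
  rcases le_or_gt 3 (x ^ 2) with hx3 | hx3
  · nlinarith [sq_nonneg (sinh x)]
  have hc : 0 ≤ sinh x * (1 - x ^ 2 / 6) := mul_nonneg (sinh_nonneg_iff.mpr hx) (by linarith)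
  have hsinh : sinh x * (1 - x ^ 2 / 6) ≤ x := by nlinarith [sinh_sub_self_le hx]
  have hsq : (sinh x * (1 - x ^ 2 / 6)) ^ 2 ≤ x ^ 2 := pow_le_pow_left₀ hc hsinh 2
  nlinarith [sq_nonneg (sinh x * x ^ 2)]

lemma abs_inv_sinh_sq_sub_inv_sq_le {x : ℝ} (hx : 0 < x) :
    |1 / sinh x ^ 2 - 1 / x ^ 2| ≤ 1 / 3 := by
  have hxs : x < sinh x := self_lt_sinh_iff.mpr hx
  have hs : 0 < sinh x := hx.trans hxs
  rw [abs_le]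
  constructor
  · rw [div_sub_div _ _ (by positivity) (by positivity), le_div_iff₀ (by positivity)]
    nlinarith [sinh_sq_mul_three_sub_sq_le hx.le]
  · have : 1 / sinh x ^ 2 ≤ 1 / x ^ 2 := one_div_le_one_div_of_le (by positivity) (by nlinarith)
    linarith

end Real

theorem stmt2 (x : ℝ) (hx : x ≠ 0) :
    |1 / (Real.sinh x) ^ 2 - 1 / x ^ 2| ≤ 1 / 3 := by
  have h := Real.abs_inv_sinh_sq_sub_inv_sq_le (abs_pos.mpr hx)
  rwa [← Real.abs_sinh, sq_abs, sq_abs] at h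
end

section
/- For every real number t ≥ 3, I_12(4π√t) ≤ (7/4)·I_13(4π√t). -/
open Real

/-- The modified Bessel function of the first kind. -/
noncomputable def besselI (ν x : ℝ) : ℝ :=
  ∑' k : ℕ, (x / 2) ^ (2 * (k : ℝ) + ν) / ((k.factorial : ℝ) * Real.Gamma ((k : ℝ) + ν + 1))

/-!
Put `y = 2π√t ≥ 87/8` and `G n = I_n(2y) = ∑ₖ y^(2k+n) / (k! (k+n)!)`. The three-term recurrence
`y G n = (n+1) G (n+1) + y G (n+2)` turns a bound on `G (n+2) / G (n+1)` into a bound in the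
opposite direction on `G n / G (n+1)`. Starting from `G 18 ≤ G 17` and descending to `n = 12`
gives `G 12 / G 13 ≤ 13/y + y² P₃(y) / P₄(y)` (a continued-fraction convergent), and this
rational function is at most `7/4` for `y ≥ 87/8`.
-/

open Nat

noncomputable def besselTerm (y : ℝ) (n k : ℕ) : ℝ := y ^ (2 * k + n) / (k ! * (k + n)! : ℝ)

noncomputable def besselSeries (y : ℝ) (n : ℕ) : ℝ := ∑' k, besselTerm y n k

section

variable {y : ℝ}

theorem besselI_natCast_two_mul (y : ℝ) (n : ℕ) : besselI n (2 * y) = besselSeries y n := by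
  refine tsum_congr fun k => ?_
  have hexp : 2 * (k : ℝ) + n = ((2 * k + n : ℕ) : ℝ) := by push_cast; ring
  have hgamma : (k : ℝ) + n + 1 = ((k + n : ℕ) : ℝ) + 1 := by push_cast; ring
  rw [mul_div_cancel_left₀ y two_ne_zero, hexp, hgamma, Real.rpow_natCast,
    Real.Gamma_nat_eq_factorial, besselTerm]

theorem besselTerm_nonneg (hy : 0 ≤ y) (n k : ℕ) : 0 ≤ besselTerm y n k := by
  unfold besselTerm; positivity

theorem summable_besselTerm (hy : 0 ≤ y) (n : ℕ) : Summable (besselTerm y n) := by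
  refine .of_nonneg_of_le (besselTerm_nonneg hy n) (fun k => ?_)
    ((Real.summable_pow_div_factorial (y ^ 2)).mul_left (y ^ n))
  rw [besselTerm, pow_add, pow_mul, mul_comm, mul_div_assoc]
  gcongr
  exact le_mul_of_one_le_right (by positivity) (mod_cast (k + n).factorial_pos)

theorem besselTerm_succ_order (y : ℝ) (n k : ℕ) :
    (k + n + 1 : ℝ) * besselTerm y (n + 1) k = y * besselTerm y n k := by
  simp only [besselTerm, ← add_assoc, factorial_succ (k + n)]
  push_cast
  field_simp
  ring

theorem besselTerm_succ_index (y : ℝ) (n k : ℕ) :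
    ((k + 1) * (k + n + 1) : ℝ) * besselTerm y n (k + 1) = y ^ 2 * besselTerm y n k := by
  simp only [besselTerm, add_right_comm k 1 n, factorial_succ]
  push_cast
  field_simp
  ring

theorem besselTerm_succ_le_half (hy : 0 ≤ y) (n k : ℕ) :
    besselTerm y (n + 1) k ≤ (besselTerm y n k + besselTerm y n (k + 1)) / 2 := by
  have hn : (k + 1 : ℝ) ≤ k + n + 1 := by linarith [(n.cast_nonneg : (0 : ℝ) ≤ n)]
  have hAB : (0 : ℝ) < (k + 1) * (k + n + 1) := by positivity
  have h1 : (k + 1) * (k + n + 1) * besselTerm y (n + 1) k = (k + 1) * y * besselTerm y n k := by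
    rw [mul_assoc, besselTerm_succ_order]; ring
  have h2 := besselTerm_succ_index y n k
  -- AM-GM: `2 (k+1) y ≤ (k+1)² + y² ≤ (k+1)(k+n+1) + y²`
  have key : 2 * (k + 1) * y * besselTerm y n k ≤
      ((k + 1) * (k + n + 1) + y ^ 2) * besselTerm y n k :=
    mul_le_mul_of_nonneg_right (by nlinarith [sq_nonneg ((k + 1 : ℝ) - y)])
      (besselTerm_nonneg hy n k)
  refine le_of_mul_le_mul_left ?_ hAB
  linarith

theorem besselTerm_recurrence (y : ℝ) (n k : ℕ) :
    y * besselTerm y n (k + 1) =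
      (n + 1) * besselTerm y (n + 1) (k + 1) + y * besselTerm y (n + 2) k := by
  simp only [besselTerm, show k + 1 + (n + 1) = k + n + 1 + 1 by omega,
    show k + (n + 2) = k + n + 1 + 1 by omega, add_right_comm k 1 n, factorial_succ]
  push_cast
  field_simp
  ring

theorem besselTerm_zero_recurrence (y : ℝ) (n : ℕ) :
    y * besselTerm y n 0 = (n + 1) * besselTerm y (n + 1) 0 := by
  simpa using (besselTerm_succ_order y n 0).symm

theorem besselSeries_nonneg (hy : 0 ≤ y) (n : ℕ) : 0 ≤ besselSeries y n :=
  tsum_nonneg (besselTerm_nonneg hy n)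

theorem besselSeries_succ_le (hy : 0 ≤ y) (n : ℕ) : besselSeries y (n + 1) ≤ besselSeries y n := by
  have hs := summable_besselTerm hy n
  have hs' : Summable fun k => besselTerm y n (k + 1) := (summable_nat_add_iff 1).mpr hs
  calc besselSeries y (n + 1)
      ≤ ∑' k, (besselTerm y n k + besselTerm y n (k + 1)) / 2 :=
        (summable_besselTerm hy (n + 1)).tsum_le_tsum (besselTerm_succ_le_half hy n)
          ((hs.add hs').div_const 2)
    _ = (besselSeries y n + ∑' k, besselTerm y n (k + 1)) / 2 := by
        rw [tsum_div_const, hs.tsum_add hs', besselSeries]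
    _ ≤ besselSeries y n := by
        rw [besselSeries, hs.tsum_eq_zero_add]
        linarith [besselTerm_nonneg hy n 0]

theorem besselSeries_recurrence (hy : 0 ≤ y) (n : ℕ) :
    y * besselSeries y n = (n + 1) * besselSeries y (n + 1) + y * besselSeries y (n + 2) := by
  have hs₁ := summable_besselTerm hy (n + 1)
  have hs₁' : Summable fun k => besselTerm y (n + 1) (k + 1) := (summable_nat_add_iff 1).mpr hs₁
  have hs₂ := summable_besselTerm hy (n + 2)
  rw [besselSeries, besselSeries, besselSeries, (summable_besselTerm hy n).tsum_eq_zero_add,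
    hs₁.tsum_eq_zero_add, mul_add, besselTerm_zero_recurrence, ← tsum_mul_left,
    tsum_congr (besselTerm_recurrence y n), (hs₁'.mul_left _).tsum_add (hs₂.mul_left _),
    tsum_mul_left, tsum_mul_left]
  ring

end

section

variable {y a u v w p q : ℝ}

theorem ratio_le_of_recurrence (hy : 0 ≤ y) (hrec : y * u = a * v + y * w) (h : p * w ≤ q * v) :
    p * y * u ≤ (a * p + y * q) * v :=
  calc p * y * u = a * p * v + y * (p * w) := by linear_combination p * hrec
    _ ≤ a * p * v + y * (q * v) := by gcongr
    _ = (a * p + y * q) * v := by ring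

theorem le_ratio_of_recurrence (hy : 0 ≤ y) (hrec : y * u = a * v + y * w) (h : q * v ≤ p * w) :
    (a * p + y * q) * v ≤ p * y * u :=
  calc (a * p + y * q) * v = a * p * v + y * (q * v) := by ring
    _ ≤ a * p * v + y * (p * w) := by gcongr
    _ = p * y * u := by linear_combination -p * hrec

end

theorem besselSeries_twelve_le (y : ℝ) (hy : 87 / 8 ≤ y) :
    besselSeries y 12 ≤ 7 / 4 * besselSeries y 13 := by
  have hy₀ : 0 ≤ y := by linarith
  have hrec := besselSeries_recurrence hy₀
  have h₁₇ : 1 * besselSeries y 18 ≤ 1 * besselSeries y 17 := by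
    simpa using besselSeries_succ_le hy₀ 17
  have h₁₆ := ratio_le_of_recurrence hy₀ (hrec 16) h₁₇
  have h₁₅ := le_ratio_of_recurrence hy₀ (hrec 15) h₁₆
  have h₁₄ := ratio_le_of_recurrence hy₀ (hrec 14) h₁₅
  have h₁₃ := le_ratio_of_recurrence hy₀ (hrec 13) h₁₄
  have h₁₂ := ratio_le_of_recurrence hy₀ (hrec 12) h₁₃
  norm_num at h₁₂
  set P₃ : ℝ := y ^ 3 + 32 * y ^ 2 + 240 * y + 4080
  set P₄ : ℝ := y ^ 4 + 30 * y ^ 3 + 720 * y ^ 2 + 3360 * y + 57120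
  have hG : P₄ * y * besselSeries y 12 ≤ (13 * P₄ + y ^ 2 * P₃) * besselSeries y 13 := by
    convert h₁₂ using 2 <;> ring
  have hpoly : 13 * P₄ + y ^ 2 * P₃ ≤ 7 / 4 * (P₄ * y) := by
    have hz : 0 ≤ y - 87 / 8 := by linarith
    nlinarith [pow_nonneg hz 2, pow_nonneg hz 3, pow_nonneg hz 4, pow_nonneg hz 5]
  have hpos : 0 < P₄ * y := by positivity
  refine le_of_mul_le_mul_left ?_ hpos
  calc P₄ * y * besselSeries y 12 ≤ (13 * P₄ + y ^ 2 * P₃) * besselSeries y 13 := hG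
    _ ≤ 7 / 4 * (P₄ * y) * besselSeries y 13 :=
        mul_le_mul_of_nonneg_right hpoly (besselSeries_nonneg hy₀ 13)
    _ = P₄ * y * (7 / 4 * besselSeries y 13) := by ring

theorem stmt3 (t : ℝ) (ht : 3 ≤ t) :
    besselI 12 (4 * Real.pi * Real.sqrt t) ≤ (7 / 4) * besselI 13 (4 * Real.pi * Real.sqrt t) := by
  have hsqrt : 1.732 ≤ √t := Real.le_sqrt_of_sq_le (by linarith)
  have hy : 87 / 8 ≤ 2 * π * √t := by nlinarith [Real.pi_gt_d2]
  have h12 := besselI_natCast_two_mul (2 * π * √t) 12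
  have h13 := besselI_natCast_two_mul (2 * π * √t) 13
  rw [show 4 * π * √t = 2 * (2 * π * √t) by ring]
  push_cast at h12 h13
  rw [h12, h13]
  exact besselSeries_twelve_le _ hy
end

section
/- Let m ≥ 1 and let n, ℓ, ñ, ℓ̃ be integers with Δ = 4mn − ℓ² > 0 and Δ̃ = 4mñ − ℓ̃² < 0. Then the series Σ_{γ=2}^∞ Kl(Δ/(4m), Δ̃/(4m); γ, ψ)_{ℓℓ̃}·γ^{−1}·I_{23/2}(π√(Δ|Δ̃|)/(γm)) converges absolutely and the modulus of its sum is strictly less than (2/21)·I_{23/2}(π√(Δ|Δ̃|)/m). -/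
open Real

/-- The multiplier system `ψ(γ, δ)_{ℓ̃ℓ}` of the index-`m` theta functions, where
`α` is the inverse of `δ` modulo `γ` (taken in `[0, γ)`). -/
noncomputable def psiMult (m γ : ℕ) (δ : ℤ) (ℓt ℓ : ℤ) : ℂ :=
  (((2 * m * γ : ℕ) : ℂ) * Complex.I) ^ (-(1 / 2 : ℂ)) *
    ∑ T ∈ Finset.range γ,
      Complex.exp (2 * (Real.pi : ℂ) * Complex.I *
        ((((((δ : ZMod γ)⁻¹).val : ℕ) : ℂ) * ((ℓt : ℂ) - 2 * m * T) ^ 2) / (4 * m * γ)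
          - ((ℓ : ℂ) * ((ℓt : ℂ) - 2 * m * T)) / (2 * m * γ)
          + ((δ : ℂ) * (ℓ : ℂ) ^ 2) / (4 * m * γ)))

/-- The generalized Kloosterman sum `Kl(A, B; γ, ψ)_{ℓℓ̃}`: the sum runs over
`δ = -j` with `0 ≤ j < γ` and `gcd(j, γ) = 1`, and `α(δ, γ)` is the inverse of `δ` mod `γ`. -/
noncomputable def Kl (m : ℕ) (A B : ℚ) (γ : ℕ) (ℓ ℓt : ℤ) : ℂ :=
  ∑ j ∈ (Finset.range γ).filter fun j => Nat.gcd j γ = 1,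
    Complex.exp (2 * (Real.pi : ℂ) * Complex.I *
      (((((-(j : ℤ) : ZMod γ)⁻¹).val : ℕ) : ℂ) * (B : ℂ) / γ + ((-(j : ℤ) : ℤ) : ℂ) * (A : ℂ) / γ)) *
    psiMult m γ (-(j : ℤ)) ℓt ℓ

/-!
Every term of the series is bounded crudely. The Kloosterman sum has at most `γ` terms, each a
unimodular exponential times `ψ`, and `|ψ| ≤ γ` because `|(2mγi)^{-1/2}| ≤ 1`; so `|Kl| ≤ γ²`.
Comparing the power series termwise gives `I_ν(x / c) ≤ c^{-ν} I_ν(x)` for `c ≥ 1`. Hence the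
`γ`-th term is at most `γ^{-21/2} I(x) ≤ I(x) / (256 (γ - 1)²)` for `γ ≥ 2`, and the whole series is
at most `π² / 1536 · I(x) < 2/21 · I(x)`, with `I(x) > 0` since `Δ |Δ̃| > 0`.
-/

open Complex

noncomputable def besselITerm (ν x : ℝ) (k : ℕ) : ℝ :=
  (x / 2) ^ (2 * (k : ℝ) + ν) / ((k.factorial : ℝ) * Real.Gamma ((k : ℝ) + ν + 1))

lemma besselI_eq_tsum_besselITerm (ν x : ℝ) : besselI ν x = ∑' k, besselITerm ν x k := rfl

section Bessel

variable {ν x : ℝ}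

lemma Gamma_add_one_le_Gamma_nat_add (hν : 0 ≤ ν) (k : ℕ) :
    Real.Gamma (ν + 1) ≤ Real.Gamma ((k : ℝ) + ν + 1) := by
  induction k with
  | zero => simp
  | succ k ih =>
    have hpos : 0 < (k : ℝ) + ν + 1 := by positivity
    rw [Nat.cast_succ, add_right_comm _ 1, Real.Gamma_add_one hpos.ne']
    nlinarith [Real.Gamma_pos_of_pos hpos, (Nat.cast_nonneg k : (0 : ℝ) ≤ k)]

lemma besselITerm_nonneg (hν : -1 < ν) (hx : 0 ≤ x) (k : ℕ) : 0 ≤ besselITerm ν x k := by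
  have : 0 < Real.Gamma ((k : ℝ) + ν + 1) :=
    Real.Gamma_pos_of_pos (by linarith [(Nat.cast_nonneg k : (0 : ℝ) ≤ k)])
  have : 0 ≤ (x / 2) ^ (2 * (k : ℝ) + ν) := Real.rpow_nonneg (div_nonneg hx zero_le_two) _
  unfold besselITerm
  positivity

lemma besselITerm_le (hν : 0 ≤ ν) (hx : 0 ≤ x) (k : ℕ) :
    besselITerm ν x k ≤ (x / 2) ^ ν / Real.Gamma (ν + 1) * (((x / 2) ^ 2) ^ k / k.factorial) := by
  have hΓ : 0 < Real.Gamma (ν + 1) := Real.Gamma_pos_of_pos (by positivity)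
  have hpow : (x / 2) ^ (2 * (k : ℝ) + ν) = ((x / 2) ^ 2) ^ k * (x / 2) ^ ν := by
    rw [Real.rpow_add_of_nonneg (div_nonneg hx zero_le_two) (by positivity) hν, ← pow_mul,
      ← Real.rpow_natCast]
    push_cast
    ring_nf
  rw [besselITerm, hpow, mul_comm (_ / _), ← mul_div_mul_comm]
  gcongr
  exact Gamma_add_one_le_Gamma_nat_add hν k

lemma summable_besselITerm (hν : 0 ≤ ν) (hx : 0 ≤ x) : Summable (besselITerm ν x) :=
  .of_nonneg_of_le (besselITerm_nonneg (by linarith) hx) (besselITerm_le hν hx)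
    ((Real.summable_pow_div_factorial _).mul_left _)

lemma besselI_nonneg (hν : -1 < ν) (hx : 0 ≤ x) : 0 ≤ besselI ν x :=
  tsum_nonneg (besselITerm_nonneg hν hx)

lemma besselI_pos (hν : 0 ≤ ν) (hx : 0 < x) : 0 < besselI ν x := by
  have hΓ : 0 < Real.Gamma (ν + 1) := Real.Gamma_pos_of_pos (by positivity)
  have h0 : 0 < besselITerm ν x 0 := by
    simp only [besselITerm, Nat.cast_zero, mul_zero, zero_add, Nat.factorial_zero, Nat.cast_one,
      one_mul]
    positivity
  exact h0.trans_le <| (summable_besselITerm hν hx.le).le_tsum 0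
    fun k _ => besselITerm_nonneg (by linarith) hx.le k

lemma besselITerm_div_le (hν : 0 ≤ ν) (hx : 0 ≤ x) {c : ℝ} (hc : 1 ≤ c) (k : ℕ) :
    besselITerm ν (x / c) k ≤ besselITerm ν x k / c ^ ν := by
  have hΓ : 0 < Real.Gamma ((k : ℝ) + ν + 1) := Real.Gamma_pos_of_pos (by positivity)
  rw [besselITerm, besselITerm, div_right_comm x c, Real.div_rpow (by positivity) (by positivity),
    div_right_comm _ (c ^ _)]
  gcongr
  linarith [(Nat.cast_nonneg k : (0 : ℝ) ≤ k)]

lemma besselI_div_le (hν : 0 ≤ ν) (hx : 0 ≤ x) {c : ℝ} (hc : 1 ≤ c) :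
    besselI ν (x / c) ≤ besselI ν x / c ^ ν := by
  rw [besselI_eq_tsum_besselITerm, besselI_eq_tsum_besselITerm, ← tsum_div_const]
  exact (summable_besselITerm hν (by positivity)).tsum_le_tsum (besselITerm_div_le hν hx hc)
    ((summable_besselITerm hν hx).div_const _)

end Bessel

lemma norm_cexp_two_pi_I_mul_of_im_eq_zero {z : ℂ} (hz : z.im = 0) :
    ‖cexp (2 * π * I * z)‖ = 1 := by
  simp [norm_exp, hz]

lemma norm_natCast_mul_I_cpow_neg_half_le (N : ℕ) : ‖((N : ℂ) * I) ^ (-(1 / 2 : ℂ))‖ ≤ 1 := by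
  rcases N.eq_zero_or_pos with rfl | hN
  · simp
  · rw [show -(1 / 2 : ℂ) = ((-(1 / 2) : ℝ) : ℂ) by push_cast; ring, norm_cpow_real]
    simpa using Real.rpow_le_one_of_one_le_of_nonpos (by exact_mod_cast hN) (by norm_num)

lemma norm_psiMult_le (m γ : ℕ) (δ ℓt ℓ : ℤ) : ‖psiMult m γ δ ℓt ℓ‖ ≤ γ := by
  rw [psiMult, norm_mul]
  calc _ ≤ 1 * ∑ _T ∈ Finset.range γ, (1 : ℝ) := by
        gcongr
        · exact norm_natCast_mul_I_cpow_neg_half_le _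
        · refine norm_sum_le_of_le _ fun T _ => (norm_cexp_two_pi_I_mul_of_im_eq_zero ?_).le
          simp [div_im, mul_re, mul_im, pow_two]
    _ = γ := by simp

lemma norm_Kl_le (m : ℕ) (A B : ℚ) (γ : ℕ) (ℓ ℓt : ℤ) : ‖Kl m A B γ ℓ ℓt‖ ≤ (γ : ℝ) ^ 2 := by
  calc ‖Kl m A B γ ℓ ℓt‖ ≤ ∑ _j ∈ (Finset.range γ).filter (fun j => Nat.gcd j γ = 1), (γ : ℝ) := by
        refine norm_sum_le_of_le _ fun j _ => ?_
        rw [norm_mul, norm_cexp_two_pi_I_mul_of_im_eq_zero (by simp [div_im, mul_re, mul_im]),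
          one_mul]
        exact norm_psiMult_le _ _ _ _ _
    _ ≤ ∑ _j ∈ Finset.range γ, (γ : ℝ) :=
        Finset.sum_le_sum_of_subset_of_nonneg (Finset.filter_subset _ _) fun _ _ _ => by positivity
    _ = (γ : ℝ) ^ 2 := by simp [sq]

lemma norm_Kl_mul_inv_mul_besselI_div_le (m : ℕ) (A B : ℚ) (ℓ ℓt : ℤ) {ν x : ℝ} (hν : 0 ≤ ν)
    (hx : 0 ≤ x) {c : ℕ} (hc : 1 ≤ c) :
    ‖Kl m A B c ℓ ℓt * (c : ℂ)⁻¹ * (besselI ν (x / c) : ℂ)‖ ≤ besselI ν x / (c : ℝ) ^ (ν - 1) := by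
  have hc' : (1 : ℝ) ≤ c := by exact_mod_cast hc
  have hI : 0 ≤ besselI ν (x / c) := besselI_nonneg (by linarith) (by positivity)
  rw [norm_mul, norm_mul, norm_inv, Complex.norm_natCast, Complex.norm_real,
    Real.norm_of_nonneg hI]
  calc _ ≤ (c : ℝ) ^ 2 * (c : ℝ)⁻¹ * (besselI ν x / (c : ℝ) ^ ν) := by
        gcongr
        · exact norm_Kl_le m A B c ℓ ℓt
        · exact besselI_div_le hν hx hc'
    _ = besselI ν x / (c : ℝ) ^ (ν - 1) := by
        rw [Real.rpow_sub (by positivity), Real.rpow_one]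
        field_simp

lemma mul_nat_add_one_sq_le_rpow (γ : ℕ) :
    256 * ((γ : ℝ) + 1) ^ 2 ≤ ((γ + 2 : ℕ) : ℝ) ^ ((23 / 2 : ℝ) - 1) := by
  have h2 : (2 : ℝ) ≤ ((γ + 2 : ℕ) : ℝ) := by
    push_cast
    linarith [(Nat.cast_nonneg γ : (0 : ℝ) ≤ γ)]
  calc 256 * ((γ : ℝ) + 1) ^ 2 ≤ 2 ^ 8 * ((γ + 2 : ℕ) : ℝ) ^ 2 := by
        gcongr
        · norm_num
        · push_cast; linarith
    _ ≤ ((γ + 2 : ℕ) : ℝ) ^ 8 * ((γ + 2 : ℕ) : ℝ) ^ 2 := by gcongr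
    _ = ((γ + 2 : ℕ) : ℝ) ^ ((10 : ℕ) : ℝ) := by rw [Real.rpow_natCast]; ring
    _ ≤ ((γ + 2 : ℕ) : ℝ) ^ ((23 / 2 : ℝ) - 1) :=
        Real.rpow_le_rpow_of_exponent_le (by linarith) (by norm_num)

lemma norm_Kl_mul_inv_mul_besselI_nat_add_two_le (m : ℕ) (A B : ℚ) (ℓ ℓt : ℤ) {x : ℝ}
    (hx : 0 ≤ x) (γ : ℕ) :
    ‖Kl m A B (γ + 2) ℓ ℓt * ((γ + 2 : ℕ) : ℂ)⁻¹ *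
        (besselI (23 / 2) (x / ((γ + 2 : ℕ) : ℝ)) : ℂ)‖ ≤
      besselI (23 / 2) x / 256 * (1 / ((γ : ℝ) + 1) ^ 2) := by
  refine (norm_Kl_mul_inv_mul_besselI_div_le m A B ℓ ℓt (by norm_num) hx (by omega)).trans ?_
  rw [div_mul_div_comm, mul_one]
  exact div_le_div_of_nonneg_left (besselI_nonneg (by norm_num) hx) (by positivity)
    (mul_nat_add_one_sq_le_rpow γ)

lemma hasSum_one_div_nat_add_one_sq :
    HasSum (fun k : ℕ => 1 / ((k : ℝ) + 1) ^ 2) (π ^ 2 / 6) := by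
  simpa using (hasSum_nat_add_iff' 1).mpr hasSum_zeta_two

theorem stmt4_general (m : ℕ) (n ℓ nt ℓt : ℤ)
    (hΔ : 0 < 4 * (m : ℤ) * n - ℓ ^ 2) (hΔt : 4 * (m : ℤ) * nt - ℓt ^ 2 < 0) :
    Summable (fun γ : ℕ =>
      ‖Kl m (((4 * (m : ℤ) * n - ℓ ^ 2 : ℤ) : ℚ) / (4 * m))
          (((4 * (m : ℤ) * nt - ℓt ^ 2 : ℤ) : ℚ) / (4 * m)) (γ + 2) ℓ ℓt *
        (((γ : ℕ) + 2 : ℕ) : ℂ)⁻¹ *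
        (besselI (23 / 2)
          (Real.pi * Real.sqrt (((4 * (m : ℤ) * n - ℓ ^ 2 : ℤ) : ℝ) *
            |((4 * (m : ℤ) * nt - ℓt ^ 2 : ℤ) : ℝ)|) / (((γ : ℕ) + 2 : ℕ) * m)) : ℝ)‖) ∧
    ‖∑' γ : ℕ,
        Kl m (((4 * (m : ℤ) * n - ℓ ^ 2 : ℤ) : ℚ) / (4 * m))
          (((4 * (m : ℤ) * nt - ℓt ^ 2 : ℤ) : ℚ) / (4 * m)) (γ + 2) ℓ ℓt *
        (((γ : ℕ) + 2 : ℕ) : ℂ)⁻¹ *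
        (besselI (23 / 2)
          (Real.pi * Real.sqrt (((4 * (m : ℤ) * n - ℓ ^ 2 : ℤ) : ℝ) *
            |((4 * (m : ℤ) * nt - ℓt ^ 2 : ℤ) : ℝ)|) / (((γ : ℕ) + 2 : ℕ) * m)) : ℝ)‖ <
      (2 / 21) * besselI (23 / 2)
        (Real.pi * Real.sqrt (((4 * (m : ℤ) * n - ℓ ^ 2 : ℤ) : ℝ) *
          |((4 * (m : ℤ) * nt - ℓt ^ 2 : ℤ) : ℝ)|) / m) := by
  set D : ℝ := ((4 * (m : ℤ) * n - ℓ ^ 2 : ℤ) : ℝ) * |((4 * (m : ℤ) * nt - ℓt ^ 2 : ℤ) : ℝ)|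
  set x := π * √D / m with hx_def
  have hm : (0 : ℝ) < m := Nat.cast_pos.mpr <| Nat.pos_of_ne_zero <| by
    rintro rfl
    push_cast at hΔ
    nlinarith [sq_nonneg ℓ]
  have hD : 0 < D := mul_pos (by exact_mod_cast hΔ) (abs_pos.mpr (by exact_mod_cast hΔt.ne))
  have hx : 0 < x := by positivity
  have harg (γ : ℕ) : π * √D / (((γ + 2 : ℕ) : ℝ) * m) = x / ((γ + 2 : ℕ) : ℝ) := by
    rw [hx_def, div_div, mul_comm (m : ℝ)]
  simp only [harg]
  have hmaj := hasSum_one_div_nat_add_one_sq.mul_left (besselI (23 / 2) x / 256)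
  refine ⟨hmaj.summable.of_nonneg_of_le (fun _ => norm_nonneg _)
      (norm_Kl_mul_inv_mul_besselI_nat_add_two_le m _ _ ℓ ℓt hx.le),
    (tsum_of_norm_bounded hmaj
      (norm_Kl_mul_inv_mul_besselI_nat_add_two_le m _ _ ℓ ℓt hx.le)).trans_lt ?_⟩
  have hI : 0 < besselI (23 / 2) x := besselI_pos (by norm_num) hx
  have hπ : π ^ 2 < 16 := by nlinarith [pi_pos, pi_lt_four]
  nlinarith [mul_pos hI (sub_pos.mpr hπ)]

theorem stmt4 (m : ℕ) (hm : 1 ≤ m) (n ℓ nt ℓt : ℤ)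
    (hΔ : 0 < 4 * (m : ℤ) * n - ℓ ^ 2) (hΔt : 4 * (m : ℤ) * nt - ℓt ^ 2 < 0) :
    Summable (fun γ : ℕ =>
      ‖Kl m (((4 * (m : ℤ) * n - ℓ ^ 2 : ℤ) : ℚ) / (4 * m))
          (((4 * (m : ℤ) * nt - ℓt ^ 2 : ℤ) : ℚ) / (4 * m)) (γ + 2) ℓ ℓt *
        (((γ : ℕ) + 2 : ℕ) : ℂ)⁻¹ *
        (besselI (23 / 2)
          (Real.pi * Real.sqrt (((4 * (m : ℤ) * n - ℓ ^ 2 : ℤ) : ℝ) *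
            |((4 * (m : ℤ) * nt - ℓt ^ 2 : ℤ) : ℝ)|) / (((γ : ℕ) + 2 : ℕ) * m)) : ℝ)‖) ∧
    ‖∑' γ : ℕ,
        Kl m (((4 * (m : ℤ) * n - ℓ ^ 2 : ℤ) : ℚ) / (4 * m))
          (((4 * (m : ℤ) * nt - ℓt ^ 2 : ℤ) : ℚ) / (4 * m)) (γ + 2) ℓ ℓt *
        (((γ : ℕ) + 2 : ℕ) : ℂ)⁻¹ *
        (besselI (23 / 2)
          (Real.pi * Real.sqrt (((4 * (m : ℤ) * n - ℓ ^ 2 : ℤ) : ℝ) *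
            |((4 * (m : ℤ) * nt - ℓt ^ 2 : ℤ) : ℝ)|) / (((γ : ℕ) + 2 : ℕ) * m)) : ℝ)‖ <
      (2 / 21) * besselI (23 / 2)
        (Real.pi * Real.sqrt (((4 * (m : ℤ) * n - ℓ ^ 2 : ℤ) : ℝ) *
          |((4 * (m : ℤ) * nt - ℓt ^ 2 : ℤ) : ℝ)|) / m) :=
  stmt4_general m n ℓ nt ℓt hΔ hΔt
end

section
/- Let m and k be integers with m ≥ 6 and 1 ≤ k < m. Then c_m^F(0, m−k) ≤ (1 + 25/d(k) + (91/(88π))·k^{1/2})·ĉ_m^F(0, m−k), where c_m^F(0, ℓ̃) = ℓ̃·d(0)·Σ_{r=1}^{⌊(m+1)/ℓ̃⌋} d(m − rℓ̃) for 0 < ℓ̃ ≤ m, and ĉ_m^F(0, ℓ̃) = ℓ̃·d(m − ℓ̃)·d(0). -/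
/-!
Write `P n = d (n - 1)` for the number of 24-tuples of partitions of total size `n`.
Removing a part `m` from the `i`-th partition is a bijection from the tuples of total size `N`
whose `i`-th partition contains `m` onto the tuples of total size `N - m`; since the distinct
parts of a partition of `n` sum to at most `n`, this gives `24 ∑_{m=1}^N m P(N - m) ≤ N P(N)`,
and `P` is monotone. Comparing `P(N - m) ≤ P(N)` for `m < W` with the weight `m / W ≥ 1` for
`m ≥ W` yields `∑_{u<N} P(u) ≤ (N / (24 W) + (W - 1) / 2) P(N)`, which is at most
`(91 / (88π)) √(N - 1) P(N)` for `W` close to `√(N / 12)`.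

In `c_m^F(0, m - k)` the arguments `m - r(m - k) = k - (r - 1)(m - k)` are distinct, and `d`
vanishes below `-1`, so the sum there is at most
`∑_{u ≤ k+1} P(u) ≤ (1 + (91 / (88π)) √k) d(k)`.
-/

/-- `d n`: the coefficient of `q^(n+1)` in `∏ (1 - q^j)^{-24}`, i.e. the number of
24-tuples of integer partitions whose sizes sum to `n+1` (and `0` for `n < -1`). -/
def dcoef (n : ℤ) : ℤ :=
  if 0 ≤ n + 1 then
    ∑ v ∈ Finset.Nat.antidiagonalTuple 24 (n + 1).toNat,
      ∏ i, (Fintype.card (Nat.Partition (v i)) : ℤ)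
  else 0

/-- `c_m^F(0, ℓ̃) = ℓ̃ · d(0) · Σ_{r=1}^{⌊(m+1)/ℓ̃⌋} d(m − rℓ̃)` for `0 < ℓ̃ ≤ m`. -/
noncomputable def cF0 (m ℓt : ℤ) : ℤ :=
  ℓt * dcoef 0 * ∑ r ∈ Finset.Icc 1 ((m + 1) / ℓt), dcoef (m - r * ℓt)

open Finset Real

lemma card_filter_mem_parts {n m : ℕ} (h1 : 1 ≤ m) (h : m ≤ n) :
    #{p : n.Partition | m ∈ p.parts} = Fintype.card (n - m).Partition := by
  rw [← Fintype.card_subtype, Fintype.card_congr (Nat.Partition.partitionWithPartEquiv h1 h)]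

lemma card_filter_mem_parts_of_lt {n m : ℕ} (h : n < m) :
    #{p : n.Partition | m ∈ p.parts} = 0 := by
  simp only [card_eq_zero, filter_eq_empty_iff, mem_univ, true_implies]
  exact fun p hp ↦ absurd (p.le_of_mem_parts hp) (by omega)

lemma sum_toFinset_le_sum (s : Multiset ℕ) : ∑ m ∈ s.toFinset, m ≤ s.sum :=
  calc ∑ m ∈ s.toFinset, m ≤ ∑ m ∈ s.toFinset, s.count m • m :=
        sum_le_sum fun m hm ↦
          Nat.le_mul_of_pos_left m (Multiset.count_pos.mpr (Multiset.mem_toFinset.mp hm))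
    _ = s.sum := (sum_multiset_count s).symm

lemma sum_mul_card_filter_mem_parts_le (s : Finset ℕ) (n : ℕ) :
    ∑ m ∈ s, m * #{p : n.Partition | m ∈ p.parts} ≤ n * Fintype.card n.Partition :=
  calc ∑ m ∈ s, m * #{p : n.Partition | m ∈ p.parts}
      = ∑ p : n.Partition, ∑ m ∈ s with m ∈ p.parts, m := by
        simp_rw [card_filter, mul_sum, mul_ite, mul_one, mul_zero, sum_filter]
        exact sum_comm
    _ ≤ ∑ _p : n.Partition, n := sum_le_sum fun p _ ↦
        calc ∑ m ∈ s with m ∈ p.parts, m ≤ ∑ m ∈ p.parts.toFinset, m :=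
              sum_le_sum_of_subset fun m hm ↦ Multiset.mem_toFinset.mpr (mem_filter.mp hm).2
          _ ≤ n := (sum_toFinset_le_sum p.parts).trans_eq p.parts_sum
    _ = n * Fintype.card n.Partition := by rw [sum_const, card_univ, smul_eq_mul, mul_comm]

def partitionTupleCount (c n : ℕ) : ℕ :=
  ∑ v ∈ Nat.antidiagonalTuple c n, ∏ i, Fintype.card (v i).Partition

lemma single_le_iff_le_apply {ι : Type*} [DecidableEq ι] (i : ι) (m : ℕ) (v : ι → ℕ) :
    Pi.single i m ≤ v ↔ m ≤ v i :=
  ⟨fun h ↦ by simpa using h i, fun h j ↦ by rcases eq_or_ne j i with rfl | hj <;> simp [*]⟩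

lemma sum_card_filter_mem_parts_mul_prod_erase {c : ℕ} (i : Fin c) {m N : ℕ} (h1 : 1 ≤ m)
    (h : m ≤ N) :
    ∑ v ∈ Nat.antidiagonalTuple c N, #{p : (v i).Partition | m ∈ p.parts} *
      ∏ j ∈ univ.erase i, Fintype.card (v j).Partition = partitionTupleCount c (N - m) := by
  classical
  rw [partitionTupleCount, ← sum_filter_of_ne (p := fun v ↦ Pi.single i m ≤ v) fun v _ hv ↦ by
    by_contra hlt
    rw [single_le_iff_le_apply, not_le] at hlt
    rw [card_filter_mem_parts_of_lt hlt, zero_mul] at hv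
    exact hv rfl]
  have hsum (w : Fin c → ℕ) : ∑ j, (w + Pi.single i m : Fin c → ℕ) j = ∑ j, w j + m := by
    simp [sum_add_distrib]
  refine sum_nbij' (fun v ↦ v - Pi.single i m) (fun w ↦ w + Pi.single i m) ?_ ?_ ?_ ?_ ?_
  · intro v hv
    simp only [mem_filter, Nat.mem_antidiagonalTuple] at hv ⊢
    have := hsum (v - Pi.single i m)
    rw [tsub_add_cancel_of_le hv.2] at this
    omega
  · intro w hw
    simp only [mem_filter, Nat.mem_antidiagonalTuple] at hw ⊢
    exact ⟨by rw [hsum, hw]; omega, le_add_self⟩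
  · intro v hv
    exact tsub_add_cancel_of_le (mem_filter.mp hv).2
  · intro w _
    exact add_tsub_cancel_right w _
  · intro v hv
    rw [← mul_prod_erase _ _ (mem_univ i)]
    congr 1
    · simp [card_filter_mem_parts h1 ((single_le_iff_le_apply i m v).mp (mem_filter.mp hv).2)]
    · refine prod_congr rfl fun j hj ↦ ?_
      simp [Pi.single_eq_of_ne (ne_of_mem_erase hj)]

lemma sum_mul_partitionTupleCount_sub_le (c N : ℕ) :
    ∑ m ∈ Icc 1 N, c * m * partitionTupleCount c (N - m) ≤ N * partitionTupleCount c N := by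
  set q : ℕ → ℕ → ℕ := fun n m ↦ #{p : n.Partition | m ∈ p.parts}
  set rest : (Fin c → ℕ) → Fin c → ℕ := fun v i ↦ ∏ j ∈ univ.erase i, Fintype.card (v j).Partition
  calc ∑ m ∈ Icc 1 N, c * m * partitionTupleCount c (N - m)
      = ∑ m ∈ Icc 1 N, ∑ v ∈ Nat.antidiagonalTuple c N, ∑ i, m * (q (v i) m * rest v i) := by
        refine sum_congr rfl fun m hm ↦ ?_
        have hm := mem_Icc.mp hm
        have hi (i : Fin c) : ∑ v ∈ Nat.antidiagonalTuple c N, m * (q (v i) m * rest v i) =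
            m * partitionTupleCount c (N - m) := by
          rw [← mul_sum, sum_card_filter_mem_parts_mul_prod_erase i hm.1 hm.2]
        rw [sum_comm, sum_congr rfl fun i _ ↦ hi i, sum_const, card_univ, Fintype.card_fin,
          smul_eq_mul, mul_assoc]
    _ = ∑ v ∈ Nat.antidiagonalTuple c N, ∑ i, (∑ m ∈ Icc 1 N, m * q (v i) m) * rest v i := by
        rw [sum_comm]
        refine sum_congr rfl fun v _ ↦ ?_
        rw [sum_comm]
        simp_rw [sum_mul, mul_assoc]
    _ ≤ ∑ v ∈ Nat.antidiagonalTuple c N, ∑ i, v i * Fintype.card (v i).Partition * rest v i :=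
        sum_le_sum fun v _ ↦ sum_le_sum fun i _ ↦
          Nat.mul_le_mul_right _ (sum_mul_card_filter_mem_parts_le _ _)
    _ = N * partitionTupleCount c N := by
        rw [partitionTupleCount, mul_sum]
        refine sum_congr rfl fun v hv ↦ ?_
        simp only [rest, mul_assoc, mul_prod_erase univ (fun j ↦ Fintype.card (v j).Partition)
          (mem_univ _)]
        rw [← sum_mul, Nat.mem_antidiagonalTuple.mp hv]

lemma partitionTupleCount_mono (c : ℕ) [NeZero c] : Monotone (partitionTupleCount c) := by
  refine monotone_nat_of_le_succ fun n ↦ ?_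
  rw [← Nat.add_sub_cancel n 1, ← sum_card_filter_mem_parts_mul_prod_erase 0 le_rfl (by omega),
    Nat.add_sub_cancel, partitionTupleCount]
  refine sum_le_sum fun v _ ↦ ?_
  rw [← mul_prod_erase _ _ (mem_univ 0)]
  exact Nat.mul_le_mul_right _ (card_filter_le _ _)

lemma sum_Ico_one_sub_div (W : ℕ) (hW : 0 < W) :
    ∑ m ∈ Ico 1 W, (1 - m / W : ℝ) = (W - 1) / 2 := by
  have hgauss : (∑ m ∈ range W, (m : ℝ)) * 2 = W * (W - 1) := by
    have := congrArg (Nat.cast : ℕ → ℝ) (sum_range_id_mul_two W)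
    push_cast [Nat.cast_sub hW] at this
    exact this
  have hW' : (W : ℝ) ≠ 0 := by positivity
  rw [sum_Ico_eq_sub _ hW, sum_sub_distrib, ← sum_div]
  simp only [sum_const, card_range, nsmul_eq_mul, mul_one, sum_range_one, Nat.cast_zero,
    zero_div, sub_zero]
  field_simp
  linarith

lemma sum_le_of_sum_mul_le {s : Finset ℕ} (hs : ∀ m ∈ s, 0 < m) {a : ℕ → ℝ} {E B : ℝ}
    (ha : ∀ m ∈ s, 0 ≤ a m) (haE : ∀ m ∈ s, a m ≤ E) (hE : 0 ≤ E)
    (hB : ∑ m ∈ s, m * a m ≤ B) {W : ℕ} (hW : 0 < W) :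
    ∑ m ∈ s, a m ≤ B / W + (W - 1) / 2 * E := by
  have hW' : (0 : ℝ) < W := by exact_mod_cast hW
  have hterm : ∀ m ∈ s, a m ≤ m / W * a m + if m < W then (1 - m / W) * E else 0 := by
    intro m hm
    split_ifs with hmW
    · have : (m : ℝ) / W ≤ 1 := (div_le_one hW').mpr (by exact_mod_cast hmW.le)
      nlinarith [haE m hm]
    · have : 1 ≤ (m : ℝ) / W := (one_le_div hW').mpr (by exact_mod_cast not_lt.mp hmW)
      nlinarith [ha m hm]
  calc ∑ m ∈ s, a m
      ≤ ∑ m ∈ s, (m / W * a m + if m < W then (1 - m / W) * E else 0) := sum_le_sum hterm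
    _ = (∑ m ∈ s, m * a m) / W + ∑ m ∈ s with m < W, (1 - m / W) * E := by
        rw [sum_add_distrib, sum_div, sum_filter]
        simp_rw [div_mul_eq_mul_div]
    _ ≤ B / W + ∑ m ∈ Ico 1 W, (1 - m / W) * E := by
        refine add_le_add (div_le_div_of_nonneg_right hB hW'.le)
          (sum_le_sum_of_subset_of_nonneg (fun m hm ↦ ?_) fun m hm _ ↦ ?_)
        · have := mem_filter.mp hm
          exact mem_Ico.mpr ⟨hs m this.1, this.2⟩
        · have : (m : ℝ) / W ≤ 1 :=
            (div_le_one hW').mpr (by exact_mod_cast (mem_Ico.mp hm).2.le)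
          nlinarith
    _ = B / W + (W - 1) / 2 * E := by rw [← sum_mul, sum_Ico_one_sub_div W hW]

lemma sum_Icc_sub_eq_sum_range {M : Type*} [AddCommMonoid M] (f : ℕ → M) (N : ℕ) :
    ∑ m ∈ Icc 1 N, f (N - m) = ∑ u ∈ range N, f u := by
  rw [← Ico_add_one_right_eq_Icc, sum_Ico_reflect f 1 le_rfl, range_eq_Ico]
  simp

lemma sum_range_partitionTupleCount_le (c N : ℕ) [NeZero c] {W : ℕ} (hW : 0 < W) :
    ∑ u ∈ range N, (partitionTupleCount c u : ℝ) ≤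
      (N / (c * W) + (W - 1) / 2) * partitionTupleCount c N := by
  have hc : (0 : ℝ) < c := by exact_mod_cast Nat.pos_of_neZero c
  have hweighted : ∑ m ∈ Icc 1 N, (m : ℝ) * partitionTupleCount c (N - m) ≤
      N * partitionTupleCount c N / c := by
    rw [le_div_iff₀ hc, sum_mul]
    exact_mod_cast (sum_congr rfl fun m _ ↦ by ring).trans_le
      (sum_mul_partitionTupleCount_sub_le c N)
  have hmono := partitionTupleCount_mono c
  rw [← sum_Icc_sub_eq_sum_range]
  refine (sum_le_of_sum_mul_le (fun m hm ↦ (mem_Icc.mp hm).1) (fun m _ ↦ Nat.cast_nonneg _)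
    (fun m _ ↦ by exact_mod_cast hmono (Nat.sub_le N m)) (Nat.cast_nonneg _) hweighted
    hW).trans_eq ?_
  ring

lemma exists_pos_div_add_le_mul_sqrt (K : ℕ) (hK : 1 ≤ K) :
    ∃ W : ℕ, 0 < W ∧ (K + 1 : ℝ) / (24 * W) + (W - 1) / 2 ≤ 91 / (88 * π) * √K := by
  have hc : 1 / 6 ≤ 91 / (88 * π) := by
    rw [div_le_div_iff₀ (by norm_num) (by positivity)]
    linarith [pi_le_four]
  have hK1 : (1 : ℝ) ≤ K := by exact_mod_cast hK
  rcases lt_or_ge K 4 with hK4 | hK4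
  · refine ⟨1, one_pos, ?_⟩
    have hK3 : (K : ℝ) ≤ 3 := by exact_mod_cast Nat.le_of_lt_succ hK4
    calc (K + 1 : ℝ) / (24 * (1 : ℕ)) + ((1 : ℕ) - 1) / 2 ≤ 1 / 6 := by norm_num; linarith
      _ ≤ 91 / (88 * π) := hc
      _ ≤ 91 / (88 * π) * √K := le_mul_of_one_le_right (by positivity) (one_le_sqrt.mpr hK1)
  · set s := √((K + 1) / 12)
    have hs0 : 0 < s := sqrt_pos.mpr (by positivity)
    have hs2 : s ^ 2 = (K + 1) / 12 := sq_sqrt (by positivity)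
    have hsW : s ≤ ⌈s⌉₊ := Nat.le_ceil s
    have hWs : (⌈s⌉₊ : ℝ) < s + 1 := Nat.ceil_lt_add_one hs0.le
    have hsK : (K + 1 : ℝ) / 12 ≤ (91 / (88 * π)) ^ 2 * K := by
      have hK4' : (4 : ℝ) ≤ K := by exact_mod_cast hK4
      have hpi : π ^ 2 ≤ 3.15 ^ 2 := pow_le_pow_left₀ pi_pos.le pi_lt_d2.le 2
      rw [div_pow, div_mul_eq_mul_div, div_le_div_iff₀ (by norm_num) (by positivity)]
      nlinarith [mul_le_mul_of_nonneg_left hpi (by positivity : (0 : ℝ) ≤ K + 1)]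
    refine ⟨⌈s⌉₊, Nat.ceil_pos.mpr hs0, ?_⟩
    calc (K + 1 : ℝ) / (24 * ⌈s⌉₊) + (⌈s⌉₊ - 1) / 2 ≤ s / 2 + s / 2 := by
          gcongr ?_ + ?_
          · rw [div_le_div_iff₀ (by positivity) (by norm_num)]
            nlinarith
          · linarith
      _ = s := by ring
      _ ≤ 91 / (88 * π) * √K := by
          rw [← sqrt_sq (by positivity : 0 ≤ 91 / (88 * π)), ← sqrt_mul (sq_nonneg _)]
          exact sqrt_le_sqrt hsK

lemma sum_range_partitionTupleCount_twentyFour_le (K : ℕ) (hK : 1 ≤ K) :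
    ∑ u ∈ range (K + 1), (partitionTupleCount 24 u : ℝ) ≤
      91 / (88 * π) * √K * partitionTupleCount 24 (K + 1) := by
  obtain ⟨W, hW, hbound⟩ := exists_pos_div_add_le_mul_sqrt K hK
  refine (sum_range_partitionTupleCount_le 24 (K + 1) hW).trans ?_
  push_cast
  exact mul_le_mul_of_nonneg_right hbound (Nat.cast_nonneg _)

lemma dcoef_nonneg (n : ℤ) : 0 ≤ dcoef n := by
  unfold dcoef
  split_ifs <;> positivity

lemma dcoef_of_lt {n : ℤ} (h : n < -1) : dcoef n = 0 :=
  if_neg (by omega)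

lemma dcoef_natCast_sub {k t : ℕ} (h : t ≤ k + 1) :
    dcoef (k - t) = partitionTupleCount 24 (k + 1 - t) := by
  rw [dcoef, if_pos (by omega), show ((k : ℤ) - t + 1).toNat = k + 1 - t by omega]
  push_cast [partitionTupleCount]
  rfl

lemma sum_comp_le_sum_range_of_injOn {ι M : Type*} [AddCommMonoid M] [PartialOrder M]
    [IsOrderedAddMonoid M] {s : Finset ι} {h : ι → ℕ} {g : ℕ → M} {N : ℕ}
    (hinj : Set.InjOn h s) (hg : ∀ t, 0 ≤ g t) (hgN : ∀ t, N ≤ t → g t = 0) :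
    ∑ i ∈ s, g (h i) ≤ ∑ t ∈ range N, g t := by
  classical
  rw [← sum_image hinj, ← sum_filter_of_ne (p := (· < N)) fun t _ ht ↦
    not_le.mp fun hle ↦ ht (hgN t hle)]
  exact sum_le_sum_of_subset_of_nonneg (fun t ht ↦ mem_range.mpr (mem_filter.mp ht).2)
    fun t _ _ ↦ hg t

lemma sum_Icc_dcoef_sub_mul_le (m : ℤ) (k : ℕ) (hkm : k < m) (R : ℤ) :
    ∑ r ∈ Icc 1 R, dcoef (m - r * (m - k)) ≤ ∑ t ∈ range (k + 2), dcoef (k - t) := by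
  have hnonneg {r : ℤ} (hr : r ∈ Icc 1 R) : 0 ≤ (r - 1) * (m - k) :=
    mul_nonneg (by linarith [(mem_Icc.mp hr).1]) (by omega)
  rw [sum_congr rfl fun r hr ↦ show dcoef (m - r * (m - k)) =
      dcoef (k - ((r - 1) * (m - k)).toNat) by rw [Int.toNat_of_nonneg (hnonneg hr)]; ring_nf]
  refine sum_comp_le_sum_range_of_injOn (fun r hr r' hr' hrr' ↦ ?_) (fun _ ↦ dcoef_nonneg _)
    fun t ht ↦ dcoef_of_lt (by omega)
  have := congrArg ((↑) : ℕ → ℤ) hrr'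
  rw [Int.toNat_of_nonneg (hnonneg hr), Int.toNat_of_nonneg (hnonneg hr')] at this
  have := mul_right_cancel₀ (by omega : m - k ≠ 0) this
  omega

lemma sum_range_dcoef_le (k : ℕ) (hk : 1 ≤ k) :
    ∑ t ∈ range (k + 2), (dcoef (k - t) : ℝ) ≤ (1 + 91 / (88 * π) * √k) * dcoef k := by
  have hdk : dcoef k = partitionTupleCount 24 (k + 1) := by
    simpa using dcoef_natCast_sub (k := k) (Nat.zero_le _)
  calc ∑ t ∈ range (k + 2), (dcoef (k - t) : ℝ)
      = ∑ t ∈ range (k + 2), (partitionTupleCount 24 (k + 1 - t) : ℝ) :=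
        sum_congr rfl fun t ht ↦ by
          rw [dcoef_natCast_sub (Nat.lt_succ_iff.mp (mem_range.mp ht)), Int.cast_natCast]
    _ = ∑ u ∈ range (k + 1), (partitionTupleCount 24 u : ℝ) + partitionTupleCount 24 (k + 1) := by
        rw [← sum_range_succ]
        simpa using sum_range_reflect (fun u ↦ (partitionTupleCount 24 u : ℝ)) (k + 2)
    _ ≤ 91 / (88 * π) * √k * partitionTupleCount 24 (k + 1) + partitionTupleCount 24 (k + 1) :=
        add_le_add_left (sum_range_partitionTupleCount_twentyFour_le k hk) _
    _ = (1 + 91 / (88 * π) * √k) * dcoef k := by rw [hdk]; push_cast; ring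

theorem stmt9_general (m k : ℤ) (hk1 : 1 ≤ k) (hkm : k < m) :
    (cF0 m (m - k) : ℝ) ≤
      (1 + 25 / (dcoef k : ℝ) + (91 / (88 * Real.pi)) * Real.sqrt k) *
        (((m - k) * dcoef k * dcoef 0 : ℤ) : ℝ) := by
  lift k to ℕ using by omega
  set S := ∑ r ∈ Icc 1 ((m + 1) / (m - k)), dcoef (m - r * (m - k))
  have hS : (S : ℝ) ≤ (1 + 91 / (88 * π) * √k) * dcoef k := by
    refine le_trans ?_ (sum_range_dcoef_le k (by exact_mod_cast hk1))
    exact_mod_cast sum_Icc_dcoef_sub_mul_le m k hkm _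
  have hX : (0 : ℝ) ≤ ((m - k) * dcoef 0 : ℤ) := by
    exact_mod_cast mul_nonneg (by omega) (dcoef_nonneg 0)
  have h25 : (0 : ℝ) ≤ 25 / dcoef k * dcoef k := by
    have : (0 : ℝ) ≤ dcoef k := by exact_mod_cast dcoef_nonneg k
    positivity
  calc (cF0 m (m - k) : ℝ) = ((m - k) * dcoef 0 : ℤ) * (S : ℝ) := by rw [← Int.cast_mul]; rfl
    _ ≤ ((m - k) * dcoef 0 : ℤ) * ((1 + 91 / (88 * π) * √k) * dcoef k + 25 / dcoef k * dcoef k) :=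
        mul_le_mul_of_nonneg_left (hS.trans (le_add_of_nonneg_right h25)) hX
    _ = _ := by push_cast; ring

theorem stmt9 (m k : ℤ) (hm : 6 ≤ m) (hk1 : 1 ≤ k) (hkm : k < m) :
    (cF0 m (m - k) : ℝ) ≤
      (1 + 25 / (dcoef k : ℝ) + (91 / (88 * Real.pi)) * Real.sqrt k) *
        (((m - k) * dcoef k * dcoef 0 : ℤ) : ℝ) :=
  stmt9_general m k hk1 hkm
end
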